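/- arXiv:2205.02590 — 3 statements merged into one kernel-verified Lean document; each statement's English description precedes it below -/
import Mathlib

section
/- Soundness of the contract for the load statement: let x, y be program variables with size(y) = N, and let Y, z be logical variables with size(Y) = N and size(z) = size(x). Then the contract {y = Y * Y ↦ z * Y + size(z) ≤ 𝔢(Y)} x := *y {x = z * y = Y * Y ↦ z * Y + size(z) ≤ 𝔢(Y)} is sound. -/
namespace Broom

abbrev Byte := Fin 256
abbrev Mem := ℕ → Option Byte

/-- Read a byte sequence (little-endian) as an unsigned number. -/
def bytesToNum : List Byte → ℕ
  | [] => 0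
  | b :: rest => b.val + 256 * bytesToNum rest

/-- The byte sequence of length `n` representing the number `v` (little-endian). -/
def natToBytes : ℕ → ℕ → List Byte
  | 0, _ => []
  | n + 1, v => (⟨v % 256, Nat.mod_lt _ (by norm_num)⟩ : Byte) :: natToBytes n (v / 256)

/-- The base address of the block of `B` containing `ℓ` (0 if there is none). -/
noncomputable def baseFn (B : Finset (ℕ × ℕ)) (ℓ : ℕ) : ℕ :=
  if h : ∃ p ∈ B, p.1 ≤ ℓ ∧ ℓ < p.2 then h.choose.1 else 0

/-- The end address of the block of `B` containing `ℓ` (0 if there is none). -/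
noncomputable def endFn (B : Finset (ℕ × ℕ)) (ℓ : ℕ) : ℕ :=
  if h : ∃ p ∈ B, p.1 ≤ ℓ ∧ ℓ < p.2 then h.choose.2 else 0

/-- Well-formed configuration (stack, blocks, memory). -/
def WfConfig {Var : Type} (N : ℕ) (sz : Var → ℕ) (s : Var → List Byte)
    (B : Finset (ℕ × ℕ)) (M : Mem) : Prop :=
  (∀ v, (s v).length = sz v) ∧
  (∀ p ∈ B, 0 < p.1 ∧ p.1 < p.2 ∧ p.2 ≤ 2 ^ (8 * N)) ∧
  (∀ p ∈ B, ∀ q ∈ B, p.1 ≠ q.1 ∨ p.2 ≠ q.2 → p.2 ≤ q.1 ∨ q.2 ≤ p.1) ∧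
  (∀ ℓ : ℕ, (M ℓ).isSome → ∃ p ∈ B, p.1 ≤ ℓ ∧ ℓ < p.2)

/-- Expressions of the separation logic. -/
inductive Expr (Var : Type) where
  | const : ℕ → ℕ → Expr Var          -- size (in bytes), value
  | var : Var → Expr Var
  | base : Expr Var → Expr Var        -- 𝔟(·)
  | ende : Expr Var → Expr Var        -- 𝔢(·)
  | add : Expr Var → Expr Var → Expr Var
  | sub : Expr Var → Expr Var → Expr Var
  | substr : Expr Var → ℕ → ℕ → Expr Var   -- ζ[i..j]

namespace Expr

variable {Var : Type}

def size (sz : Var → ℕ) (N : ℕ) : Expr Var → ℕ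
  | const n _ => n
  | var v => sz v
  | base _ => N
  | ende _ => N
  | add e₁ _ => e₁.size sz N
  | sub e₁ _ => e₁.size sz N
  | substr _ i j => j - i

noncomputable def eval (B : Finset (ℕ × ℕ)) (s : Var → List Byte) : Expr Var → ℕ
  | const _ v => v
  | var x => bytesToNum (s x)
  | base e => baseFn B (e.eval B s)
  | ende e => endFn B (e.eval B s)
  | add e₁ e₂ => e₁.eval B s + e₂.eval B s
  | sub e₁ e₂ => e₁.eval B s - e₂.eval B s
  | substr e i j => (e.eval B s / 256 ^ i) % 256 ^ (j - i)

def fv : Expr Var → Set Var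
  | const _ _ => ∅
  | var v => {v}
  | base e => e.fv
  | ende e => e.fv
  | add e₁ e₂ => e₁.fv ∪ e₂.fv
  | sub e₁ e₂ => e₁.fv ∪ e₂.fv
  | substr e _ _ => e.fv

/-- The expression does not use the operators 𝔟(·) and 𝔢(·). -/
def noBE : Expr Var → Prop
  | const _ _ => True
  | var _ => True
  | base _ => False
  | ende _ => False
  | add e₁ e₂ => e₁.noBE ∧ e₂.noBE
  | sub e₁ e₂ => e₁.noBE ∧ e₂.noBE
  | substr e _ _ => e.noBE

def subst (σ : Var → Expr Var) : Expr Var → Expr Var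
  | const n v => const n v
  | var v => σ v
  | base e => base (e.subst σ)
  | ende e => ende (e.subst σ)
  | add e₁ e₂ => add (e₁.subst σ) (e₂.subst σ)
  | sub e₁ e₂ => sub (e₁.subst σ) (e₂.subst σ)
  | substr e i j => substr (e.subst σ) i j

end Expr

inductive CmpOp where
  | eq | ne | le | lt | ge | gt

def CmpOp.sem : CmpOp → ℕ → ℕ → Prop
  | eq, a, b => a = b
  | ne, a, b => a ≠ b
  | le, a, b => a ≤ b
  | lt, a, b => a < b
  | ge, a, b => b ≤ a
  | gt, a, b => b < a

def CmpOp.compl : CmpOp → CmpOp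
  | eq => ne
  | ne => eq
  | le => gt
  | lt => ge
  | ge => lt
  | gt => le

/-- Formulae of the separation logic. `ptsBlk ε none κ` is `ε ↦ ⊤[κ]`,
`ptsBlk ε (some b) κ` is `ε ↦ b[κ]`. -/
inductive SLF (Var : Type) where
  | emp : SLF Var
  | tt : SLF Var
  | pts : Expr Var → Expr Var → SLF Var
  | ptsBlk : Expr Var → Option Byte → Expr Var → SLF Var
  | cmp : CmpOp → Expr Var → Expr Var → SLF Var
  | star : SLF Var → SLF Var → SLF Var
  | disj : SLF Var → SLF Var → SLF Var
  | exis : Var → SLF Var → SLF Var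

/-- `M` is the disjoint union of `M₁` and `M₂`. -/
def msplit (M M₁ M₂ : Mem) : Prop :=
  (∀ ℓ, ¬((M₁ ℓ).isSome ∧ (M₂ ℓ).isSome)) ∧
  (∀ ℓ, M ℓ = if (M₁ ℓ).isSome then M₁ ℓ else M₂ ℓ)

/-- The byte sequence `M[a, a+n)`. -/
def readBytes (M : Mem) (a n : ℕ) : List Byte :=
  (List.range n).map fun i => (M (a + i)).getD 0

/-- Satisfaction of a separation-logic formula by a configuration. -/
def sat {Var : Type} [DecidableEq Var] (N : ℕ) (sz : Var → ℕ) :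
    (Var → List Byte) → Finset (ℕ × ℕ) → Mem → SLF Var → Prop
  | _, _, M, .emp => ∀ ℓ, M ℓ = none
  | _, _, _, .tt => True
  | s, B, M, .pts e₁ e₂ =>
      (∀ ℓ, (M ℓ).isSome ↔ (e₁.eval B s ≤ ℓ ∧ ℓ < e₁.eval B s + e₂.size sz N)) ∧
      bytesToNum (readBytes M (e₁.eval B s) (e₂.size sz N)) = e₂.eval B s % 256 ^ e₂.size sz N
  | s, B, M, .ptsBlk e₁ m e₂ =>
      (∀ ℓ, (M ℓ).isSome ↔ (e₁.eval B s ≤ ℓ ∧ ℓ < e₁.eval B s + e₂.eval B s)) ∧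
      (∀ b, m = some b → ∀ ℓ, e₁.eval B s ≤ ℓ → ℓ < e₁.eval B s + e₂.eval B s → M ℓ = some b)
  | s, B, M, .cmp op e₁ e₂ => (∀ ℓ, M ℓ = none) ∧ op.sem (e₁.eval B s) (e₂.eval B s)
  | s, B, M, .star φ₁ φ₂ => ∃ M₁ M₂, msplit M M₁ M₂ ∧ sat N sz s B M₁ φ₁ ∧ sat N sz s B M₂ φ₂
  | s, B, M, .disj φ₁ φ₂ => sat N sz s B M φ₁ ∨ sat N sz s B M φ₂
  | s, B, M, .exis x φ => ∃ v : List Byte, v.length = sz x ∧ sat N sz (Function.update s x v) B M φ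

namespace SLF

variable {Var : Type}

/-- Free variables of a formula. -/
def fv : SLF Var → Set Var
  | emp => ∅
  | tt => ∅
  | pts e₁ e₂ => e₁.fv ∪ e₂.fv
  | ptsBlk e₁ _ e₂ => e₁.fv ∪ e₂.fv
  | cmp _ e₁ e₂ => e₁.fv ∪ e₂.fv
  | star φ₁ φ₂ => φ₁.fv ∪ φ₂.fv
  | disj φ₁ φ₂ => φ₁.fv ∪ φ₂.fv
  | exis x φ => φ.fv \ {x}

/-- Symbolic heaps are the disjunction-free formulae. -/
def noDisj : SLF Var → Prop
  | emp => True
  | tt => True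
  | pts _ _ => True
  | ptsBlk _ _ _ => True
  | cmp _ _ _ => True
  | star φ₁ φ₂ => φ₁.noDisj ∧ φ₂.noDisj
  | disj _ _ => False
  | exis _ φ => φ.noDisj

/-- Quantifier-free formulae. -/
def qf : SLF Var → Prop
  | emp => True
  | tt => True
  | pts _ _ => True
  | ptsBlk _ _ _ => True
  | cmp _ _ _ => True
  | star φ₁ φ₂ => φ₁.qf ∧ φ₂.qf
  | disj φ₁ φ₂ => φ₁.qf ∧ φ₂.qf
  | exis _ _ => False

/-- The formula does not use the operators 𝔟(·) and 𝔢(·) in its expressions. -/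
def noBE : SLF Var → Prop
  | emp => True
  | tt => True
  | pts e₁ e₂ => e₁.noBE ∧ e₂.noBE
  | ptsBlk e₁ _ e₂ => e₁.noBE ∧ e₂.noBE
  | cmp _ e₁ e₂ => e₁.noBE ∧ e₂.noBE
  | star φ₁ φ₂ => φ₁.noBE ∧ φ₂.noBE
  | disj φ₁ φ₂ => φ₁.noBE ∧ φ₂.noBE
  | exis _ φ => φ.noBE

/-- Pure formulae: separating conjunctions of pure atoms. -/
def isPure : SLF Var → Prop
  | cmp _ _ _ => True
  | star φ₁ φ₂ => φ₁.isPure ∧ φ₂.isPure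
  | _ => False

def subst [DecidableEq Var] (σ : Var → Expr Var) : SLF Var → SLF Var
  | emp => emp
  | tt => tt
  | pts e₁ e₂ => pts (e₁.subst σ) (e₂.subst σ)
  | ptsBlk e₁ m e₂ => ptsBlk (e₁.subst σ) m (e₂.subst σ)
  | cmp op e₁ e₂ => cmp op (e₁.subst σ) (e₂.subst σ)
  | star φ₁ φ₂ => star (φ₁.subst σ) (φ₂.subst σ)
  | disj φ₁ φ₂ => disj (φ₁.subst σ) (φ₂.subst σ)
  | exis x φ => exis x (φ.subst fun v => if v = x then .var v else σ v)

end SLF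

/-- Semantic entailment `φ ⊨ ψ`. -/
def Entails {Var : Type} [DecidableEq Var] (N : ℕ) (sz : Var → ℕ) (φ ψ : SLF Var) : Prop :=
  ∀ s B M, WfConfig N sz s B M → sat N sz s B M φ → sat N sz s B M ψ

/-- Existential quantification over a list of variables. -/
def exisList {Var : Type} : List Var → SLF Var → SLF Var
  | [], φ => φ
  | x :: xs, φ => .exis x (exisList xs φ)

/-- Semantic separating conjunction of memory predicates. -/
def mstar (P Q : Mem → Prop) : Mem → Prop :=
  fun M => ∃ M₁ M₂, msplit M M₁ M₂ ∧ P M₁ ∧ Q M₂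

/-- The singly-linked list-segment predicate `sll_Λ(ε₁, ε₂)`,
parameterized by the segment formula `Λ`. -/
inductive Sll {Var : Type} [DecidableEq Var] (N : ℕ) (sz : Var → ℕ)
    (Lam : Expr Var → Expr Var → SLF Var) (s : Var → List Byte) (B : Finset (ℕ × ℕ)) :
    Mem → Expr Var → Expr Var → Prop where
  | nil {M : Mem} {e₁ e₂ : Expr Var} :
      e₁.eval B s = e₂.eval B s → (∀ ℓ, M ℓ = none) → Sll N sz Lam s B M e₁ e₂
  | cons {M M₁ M₂ : Mem} {e₁ e₂ : Expr Var} (ℓ : ℕ) :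
      ℓ < 2 ^ (8 * N) → e₁.eval B s ≠ e₂.eval B s → msplit M M₁ M₂ →
      sat N sz s B M₁ (Lam e₁ (.const N ℓ)) →
      Sll N sz Lam s B M₂ (.const N ℓ) e₂ → Sll N sz Lam s B M e₁ e₂

/-- The segment formula `Λ` is block-closed. -/
def BlockClosed {Var : Type} [DecidableEq Var] (N : ℕ) (sz : Var → ℕ)
    (Lam : Expr Var → Expr Var → SLF Var) : Prop :=
  ∀ (e₁ e₂ : Expr Var) (s : Var → List Byte) (B : Finset (ℕ × ℕ)) (M : Mem),
    WfConfig N sz s B M → sat N sz s B M (Lam e₁ e₂) →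
    ∀ ℓ, (M ℓ).isSome → ∀ ℓ', baseFn B ℓ ≤ ℓ' → ℓ' < endFn B ℓ → (M ℓ').isSome


lemma bytesToNum_lt (l : List Byte) : bytesToNum l < 256 ^ l.length := by
  induction l with
  | nil => simp [bytesToNum]
  | cons b t ih =>
      have hb := b.isLt
      simp only [bytesToNum, List.length_cons, pow_succ]
      nlinarith [ih]

lemma eval_congr {Var : Type} (B : Finset (ℕ × ℕ)) (s s' : Var → List Byte) (e : Expr Var)
    (h : ∀ v ∈ e.fv, s v = s' v) : e.eval B s = e.eval B s' := by
  induction e with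
  | const n v => rfl
  | var v => simp [Expr.eval, h v (by simp [Expr.fv])]
  | base e ih => simp [Expr.eval, ih h]
  | ende e ih => simp [Expr.eval, ih h]
  | add e₁ e₂ ih₁ ih₂ =>
      simp [Expr.eval, ih₁ fun v hv => h v (Set.mem_union_left _ hv),
        ih₂ fun v hv => h v (Set.mem_union_right _ hv)]
  | sub e₁ e₂ ih₁ ih₂ =>
      simp [Expr.eval, ih₁ fun v hv => h v (Set.mem_union_left _ hv),
        ih₂ fun v hv => h v (Set.mem_union_right _ hv)]
  | substr e i j ih => simp [Expr.eval, ih h]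

lemma sat_congr {Var : Type} [DecidableEq Var] (N : ℕ) (sz : Var → ℕ) (φ : SLF Var)
    (s s' : Var → List Byte) (B : Finset (ℕ × ℕ)) (M : Mem)
    (h : ∀ v ∈ φ.fv, s v = s' v) (hs : sat N sz s B M φ) : sat N sz s' B M φ := by
  induction φ generalizing s s' M with
  | emp => exact hs
  | tt => trivial
  | pts e₁ e₂ =>
      have h1 := eval_congr B s s' e₁ fun v hv => h v (Set.mem_union_left _ hv)
      have h2 := eval_congr B s s' e₂ fun v hv => h v (Set.mem_union_right _ hv)
      simpa [sat, h1, h2] using hs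
  | ptsBlk e₁ m e₂ =>
      have h1 := eval_congr B s s' e₁ fun v hv => h v (Set.mem_union_left _ hv)
      have h2 := eval_congr B s s' e₂ fun v hv => h v (Set.mem_union_right _ hv)
      simpa [sat, h1, h2] using hs
  | cmp op e₁ e₂ =>
      have h1 := eval_congr B s s' e₁ fun v hv => h v (Set.mem_union_left _ hv)
      have h2 := eval_congr B s s' e₂ fun v hv => h v (Set.mem_union_right _ hv)
      simpa [sat, h1, h2] using hs
  | star φ₁ φ₂ ih₁ ih₂ =>
      obtain ⟨M₁, M₂, hsp, h₁, h₂⟩ := hs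
      exact ⟨M₁, M₂, hsp, ih₁ _ _ _ (fun v hv => h v (Set.mem_union_left _ hv)) h₁,
        ih₂ _ _ _ (fun v hv => h v (Set.mem_union_right _ hv)) h₂⟩
  | disj φ₁ φ₂ ih₁ ih₂ =>
      rcases hs with hs | hs
      · exact Or.inl (ih₁ _ _ _ (fun v hv => h v (Set.mem_union_left _ hv)) hs)
      · exact Or.inr (ih₂ _ _ _ (fun v hv => h v (Set.mem_union_right _ hv)) hs)
  | exis xx φ ih =>
      obtain ⟨v, hlen, hv⟩ := hs
      refine ⟨v, hlen, ih _ _ _ ?_ hv⟩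
      intro w hw
      by_cases hwx : w = xx
      · subst hwx; simp
      · rw [Function.update_of_ne hwx, Function.update_of_ne hwx]
        exact h w ⟨hw, hwx⟩

/-- Soundness of the contract for the load statement `x := *y`:
`{y = Y * Y ↦ z * Y + size(z) ≤ 𝔢(Y)} x := *y {x = z * y = Y * Y ↦ z * Y + size(z) ≤ 𝔢(Y)}`.
For every frame `F` (a symbolic heap over logical variables only) and every well-formed
configuration satisfying `F * P`, the execution of `x := *y` does not err, and the
resulting configuration satisfies `F * Q`. -/
theorem load_contract_sound {Var : Type} [DecidableEq Var]
    (N : ℕ) (hN : 1 ≤ N) (sz : Var → ℕ) (hszpos : ∀ v, 1 ≤ sz v)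
    (LVar : Set Var)
    -- program variables x, y; logical variables Y, z
    (x y Y z : Var)
    (hx : x ∉ LVar) (hy : y ∉ LVar) (hY : Y ∈ LVar) (hz : z ∈ LVar)
    (hxy : x ≠ y) (hYz : Y ≠ z)
    (hszy : sz y = N) (hszY : sz Y = N) (hszz : sz z = sz x)
    -- the frame: a symbolic heap over logical variables only
    (F : SLF Var) (hFsh : F.noDisj) (hFlv : F.fv ⊆ LVar)
    (s : Var → List Byte) (B : Finset (ℕ × ℕ)) (M : Mem)
    (hwf : WfConfig N sz s B M)
    -- (s,B,M) ⊨ F * (y = Y * Y ↦ z * Y + size(z) ≤ 𝔢(Y))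
    (hpre : sat N sz s B M (F.star
      (((SLF.cmp .eq (.var y) (.var Y)).star
          (SLF.pts (.var Y) (.var z))).star
        (SLF.cmp .le (.add (.var Y) (.const N (sz z))) (.ende (.var Y)))))) :
    -- the execution does not err ...
    ¬ (baseFn B (bytesToNum (s y)) = 0 ∨
        bytesToNum (s y) + sz x > endFn B (bytesToNum (s y))) ∧
    -- ... and the resulting configuration satisfies
    -- F * (x = z * y = Y * Y ↦ z * Y + size(z) ≤ 𝔢(Y))
    sat N sz (Function.update s x (readBytes M (bytesToNum (s y)) (sz x))) B M
      (F.star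
        ((((SLF.cmp .eq (.var x) (.var z)).star
            (SLF.cmp .eq (.var y) (.var Y))).star
          (SLF.pts (.var Y) (.var z))).star
          (SLF.cmp .le (.add (.var Y) (.const N (sz z))) (.ende (.var Y))))) := by
  classical
  have hxY : x ≠ Y := fun h => hx (h ▸ hY)
  have hxz : x ≠ z := fun h => hx (h ▸ hz)
  obtain ⟨MF, Mr, hsp1, hF, hrest⟩ := hpre
  obtain ⟨Mc, Ml, hsp2, hc, hl⟩ := hrest
  obtain ⟨Me, Mp, hsp3, hyY, hpts⟩ := hc
  obtain ⟨hyemp, heq⟩ := hyY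
  obtain ⟨hlemp, hle⟩ := hl
  obtain ⟨hdom, hval⟩ := hpts
  simp only [Expr.eval, CmpOp.sem, Expr.size] at heq hle hdom hval
  set a := bytesToNum (s y) with ha
  -- hle : bytesToNum (s Y) + sz z ≤ endFn B (bytesToNum (s Y))
  rw [← heq] at hle hdom hval
  have hzpos := hszpos z
  -- there is a block containing a
  have hex : ∃ p ∈ B, p.1 ≤ a ∧ a < p.2 := by
    by_contra hne
    have h0 : endFn B a = 0 := by rw [endFn, dif_neg hne]
    omega
  have hbase : baseFn B a = hex.choose.1 := by rw [baseFn, dif_pos hex]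
  obtain ⟨hmem, hlo, hhi⟩ := hex.choose_spec
  have hbpos := (hwf.2.1 _ hmem).1
  -- memory agreement on [a, a + sz z)
  have hMagree : ∀ ℓ, a ≤ ℓ → ℓ < a + sz z → M ℓ = Mp ℓ := by
    intro ℓ h1 h2
    have hps : (Mp ℓ).isSome := (hdom ℓ).2 ⟨h1, h2⟩
    have hMc : Mc ℓ = Mp ℓ := by rw [hsp3.2 ℓ, hyemp ℓ]; simp
    have hMcs : (Mc ℓ).isSome := hMc ▸ hps
    have hMr : Mr ℓ = Mc ℓ := by rw [hsp2.2 ℓ, if_pos hMcs]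
    have hMrs : (Mr ℓ).isSome := hMr ▸ hMcs
    have hMFn : ¬ (MF ℓ).isSome := fun h => hsp1.1 ℓ ⟨h, hMrs⟩
    rw [hsp1.2 ℓ, if_neg hMFn, hMr, hMc]
  have hread : readBytes M a (sz x) = readBytes Mp a (sz z) := by
    rw [← hszz]
    unfold readBytes
    refine List.map_congr_left fun i hi => ?_
    rw [List.mem_range] at hi
    rw [hMagree (a + i) (by omega) (by omega)]
  have hbval : bytesToNum (readBytes M a (sz x)) = bytesToNum (s z) := by
    rw [hread, hval]
    have hlt := bytesToNum_lt (s z)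
    rw [hwf.1 z] at hlt
    exact Nat.mod_eq_of_lt hlt
  constructor
  · push_neg
    constructor
    · rw [hbase]; omega
    · omega
  · -- postcondition
    set s' := Function.update s x (readBytes M a (sz x)) with hs'
    have hsy : s' y = s y := Function.update_of_ne (Ne.symm hxy) _ _
    have hsY : s' Y = s Y := Function.update_of_ne (Ne.symm hxY) _ _
    have hsz' : s' z = s z := Function.update_of_ne (Ne.symm hxz) _ _
    have hsx : s' x = readBytes M a (sz x) := Function.update_self _ _ _
    refine ⟨MF, Mr, hsp1, ?_, ?_⟩
    · refine sat_congr N sz F s s' B MF (fun v hv => ?_) hF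
      have hne : v ≠ x := fun h => hx (h ▸ hFlv hv)
      exact (Function.update_of_ne hne _ _).symm
    · refine ⟨Mc, Ml, hsp2, ⟨Me, Mp, hsp3, ?_, ?_⟩, ?_⟩
      · -- (x = z) * (y = Y) on Me (all none)
        refine ⟨(fun _ => none), Me, ⟨fun ℓ => by simp, fun ℓ => by simp⟩, ?_, ?_⟩
        · refine ⟨fun ℓ => rfl, ?_⟩
          simp only [sat, Expr.eval, CmpOp.sem]
          rw [hsx, hsz', hbval]
        · refine ⟨hyemp, ?_⟩
          simp only [Expr.eval, CmpOp.sem]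
          rw [hsy, hsY, ← heq]
      · -- pts on Mp
        refine ⟨?_, ?_⟩
        · simp only [Expr.eval, Expr.size]
          rw [hsY, ← heq]
          exact hdom
        · simp only [Expr.eval, Expr.size]
          rw [hsY, hsz', ← heq]
          exact hval
      · -- le on Ml
        refine ⟨hlemp, ?_⟩
        simp only [Expr.eval, CmpOp.sem]
        rw [hsY, ← heq]
        exact hle

end Broom
end

section
/- Soundness of the contract for deallocation of a non-null pointer: let x be a program variable with size(x) = N, let X be a logical variable with size(X) = N, and y a variable with size(y) = N. Then the contract {x = X * X ↦ ⊤[y] * 𝔟(X) = X * 𝔢(X) = X + y} free(x) {x = X}, restricted to frames F whose expressions do not use the operators 𝔟(·) and 𝔢(·), is sound. -/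
namespace Broom

theorem eval_noBE' {Var : Type} (B B' : Finset (ℕ × ℕ)) (s : Var → List Byte) :
    ∀ e : Expr Var, e.noBE → e.eval B s = e.eval B' s := by
  intro e h
  induction e with
  | const n v => rfl
  | var v => rfl
  | base e ih => exact h.elim
  | ende e ih => exact h.elim
  | add e₁ e₂ ih₁ ih₂ => simp [Expr.eval, ih₁ h.1, ih₂ h.2]
  | sub e₁ e₂ ih₁ ih₂ => simp [Expr.eval, ih₁ h.1, ih₂ h.2]
  | substr e i j ih => simp [Expr.eval, ih h]

theorem sat_noBE' {Var : Type} [DecidableEq Var] (N : ℕ) (sz : Var → ℕ)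
    (B B' : Finset (ℕ × ℕ)) :
    ∀ (φ : SLF Var) (s : Var → List Byte) (M : Mem), φ.noBE →
      (sat N sz s B M φ ↔ sat N sz s B' M φ) := by
  intro φ
  induction φ with
  | emp => intro s M h; rfl
  | tt => intro s M h; rfl
  | pts e₁ e₂ =>
    intro s M h
    simp only [sat, eval_noBE' B B' s e₁ h.1, eval_noBE' B B' s e₂ h.2]
  | ptsBlk e₁ m e₂ =>
    intro s M h
    simp only [sat, eval_noBE' B B' s e₁ h.1, eval_noBE' B B' s e₂ h.2]
  | cmp op e₁ e₂ =>
    intro s M h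
    simp only [sat, eval_noBE' B B' s e₁ h.1, eval_noBE' B B' s e₂ h.2]
  | star φ₁ φ₂ ih₁ ih₂ =>
    intro s M h
    constructor
    · rintro ⟨M₁, M₂, hs, h1, h2⟩
      exact ⟨M₁, M₂, hs, (ih₁ s M₁ h.1).mp h1, (ih₂ s M₂ h.2).mp h2⟩
    · rintro ⟨M₁, M₂, hs, h1, h2⟩
      exact ⟨M₁, M₂, hs, (ih₁ s M₁ h.1).mpr h1, (ih₂ s M₂ h.2).mpr h2⟩
  | disj φ₁ φ₂ ih₁ ih₂ =>
    intro s M h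
    exact or_congr (ih₁ s M h.1) (ih₂ s M h.2)
  | exis x φ ih =>
    intro s M h
    constructor
    · rintro ⟨v, hv, hs⟩
      exact ⟨v, hv, (ih _ M h).mp hs⟩
    · rintro ⟨v, hv, hs⟩
      exact ⟨v, hv, (ih _ M h).mpr hs⟩

/-- Soundness of the contract for deallocation of a non-null pointer:
`{x = X * X ↦ ⊤[y] * 𝔟(X) = X * 𝔢(X) = X + y} free(x) {x = X}`, restricted to frames
whose expressions do not use the operators 𝔟(·) and 𝔢(·). -/
theorem free_contract_sound {Var : Type} [DecidableEq Var]
    (N : ℕ) (hN : 1 ≤ N) (sz : Var → ℕ) (hszpos : ∀ v, 1 ≤ sz v)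
    (LVar : Set Var)
    -- program variable x; logical variables X, y
    (x X y : Var)
    (hx : x ∉ LVar) (hX : X ∈ LVar) (hy : y ∈ LVar)
    (hXy : X ≠ y)
    (hszx : sz x = N) (hszX : sz X = N) (hszy : sz y = N)
    -- the frame: a symbolic heap over logical variables only, not using 𝔟(·)/𝔢(·)
    (F : SLF Var) (hFsh : F.noDisj) (hFlv : F.fv ⊆ LVar) (hFbe : F.noBE)
    (s : Var → List Byte) (B : Finset (ℕ × ℕ)) (M : Mem)
    (hwf : WfConfig N sz s B M)
    -- (s,B,M) ⊨ F * (x = X * X ↦ ⊤[y] * 𝔟(X) = X * 𝔢(X) = X + y)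
    (hpre : sat N sz s B M (F.star
      ((((SLF.cmp .eq (.var x) (.var X)).star
          (SLF.ptsBlk (.var X) none (.var y))).star
        (SLF.cmp .eq (.base (.var X)) (.var X))).star
        (SLF.cmp .eq (.ende (.var X)) (.add (.var X) (.var y)))))) :
    -- the execution does not err (s(x) is the base of its block) ...
    bytesToNum (s x) = baseFn B (bytesToNum (s x)) ∧
    -- ... and the resulting configuration (block removed, memory undefined on it)
    -- satisfies F * (x = X)
    sat N sz s
      (B.erase (bytesToNum (s x), endFn B (bytesToNum (s x))))
      (fun ℓ => if bytesToNum (s x) ≤ ℓ ∧ ℓ < endFn B (bytesToNum (s x)) then none else M ℓ)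
      (F.star (SLF.cmp .eq (.var x) (.var X))) := by
  obtain ⟨MF, MP, hsp, hF, hinner⟩ := hpre
  obtain ⟨MA, M4, hsp4, hA, hE⟩ := hinner
  obtain ⟨MB, M3, hsp3, hB, hBase⟩ := hA
  obtain ⟨M1, M2, hsp12, h1, h2⟩ := hB
  -- unpack pure atoms
  simp only [sat, Expr.eval, CmpOp.sem] at hE hBase h1
  obtain ⟨hM4, hE⟩ := hE
  obtain ⟨hM3, hBase⟩ := hBase
  obtain ⟨hM1, hxX⟩ := h1
  obtain ⟨h2dom, -⟩ := h2
  simp only [Expr.eval] at h2dom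
  set l := bytesToNum (s X) with hl
  have hxl : bytesToNum (s x) = l := hxX
  -- M2 = MP pointwise
  have hPM2 : ∀ ℓ, MP ℓ = M2 ℓ := by
    intro ℓ
    have e4 := hsp4.2 ℓ
    have e3 := hsp3.2 ℓ
    have e12 := hsp12.2 ℓ
    rw [hM4 ℓ] at e4
    rw [hM3 ℓ] at e3
    rw [hM1 ℓ] at e12
    simp at e12
    rw [e12] at e3
    have e3' : MA ℓ = M2 ℓ := by
      by_cases hMB : (M2 ℓ).isSome
      · rw [if_pos hMB] at e3; exact e3
      · rw [if_neg hMB] at e3; rw [e3, Option.not_isSome_iff_eq_none.mp hMB]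
    rw [e3'] at e4
    by_cases hMB : (M2 ℓ).isSome
    · rw [if_pos hMB] at e4; exact e4
    · rw [if_neg hMB] at e4; rw [e4, Option.not_isSome_iff_eq_none.mp hMB]
  -- disjointness of MF and M2
  have hdisj : ∀ ℓ, (M2 ℓ).isSome → MF ℓ = none := by
    intro ℓ h
    have := hsp.1 ℓ
    rw [hPM2 ℓ] at this
    by_contra hc
    exact this ⟨Option.isSome_iff_ne_none.mpr hc, h⟩
  have hend : endFn B l = l + bytesToNum (s y) := hE
  -- the new memory equals MF
  have hMF : (fun ℓ => if bytesToNum (s x) ≤ ℓ ∧ ℓ < endFn B (bytesToNum (s x)) then none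
      else M ℓ) = MF := by
    funext ℓ
    rw [hxl]
    by_cases hrange : l ≤ ℓ ∧ ℓ < endFn B l
    · rw [if_pos hrange]
      have h2some : (M2 ℓ).isSome := by
        rw [h2dom ℓ]
        exact ⟨hrange.1, by rw [← hend]; exact hrange.2⟩
      exact (hdisj ℓ h2some).symm
    · rw [if_neg hrange]
      have h2none : M2 ℓ = none := by
        by_contra hc
        have := (h2dom ℓ).mp (Option.isSome_iff_ne_none.mpr hc)
        rw [← hend] at this
        exact hrange this
      have := hsp.2 ℓ
      rw [hPM2 ℓ, h2none] at this
      by_cases hMFs : (MF ℓ).isSome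
      · rw [this, if_pos hMFs]
      · rw [this, if_neg hMFs, Option.not_isSome_iff_eq_none.mp hMFs]
  refine ⟨by rw [hxl, hBase], ?_⟩
  refine ⟨MF, fun _ => none, ⟨fun ℓ => by simp, fun ℓ => ?_⟩, ?_, ?_⟩
  · rw [hMF]
    by_cases hMFs : (MF ℓ).isSome
    · rw [if_pos hMFs]
    · rw [if_neg hMFs, Option.not_isSome_iff_eq_none.mp hMFs]
  · exact (sat_noBE' N sz B _ F s MF hFbe).mp hF
  · exact ⟨fun ℓ => rfl, hxX⟩

end Broom
end

section
/- Soundness of the match abduction rule: let φ, M, ψ be separation-logic formulas, and ε, ε', ζ, ζ' expressions with size(ζ) = size(ζ'). Suppose φ ⊨ (ε = ε') * true. If φ * (ζ = ζ') * M ⊨ ψ, then φ * (ε ↦ ζ) * (ζ = ζ') * M ⊨ ψ * (ε' ↦ ζ'). -/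
namespace Broom

section Aux
variable {Var : Type} [DecidableEq Var]

/-- Join of two memories. -/
def mjoin (A B : Mem) : Mem := fun ℓ => if (A ℓ).isSome then A ℓ else B ℓ

lemma msplit_left_eq {M A B : Mem} (h : msplit M A B) {ℓ : ℕ} (hA : (A ℓ).isSome) :
    M ℓ = A ℓ := by
  rw [h.2 ℓ, if_pos hA]

lemma msplit_right_eq {M A B : Mem} (h : msplit M A B) {ℓ : ℕ} (hB : (B ℓ).isSome) :
    M ℓ = B ℓ := by
  have hA : ¬ (A ℓ).isSome := fun hA => h.1 ℓ ⟨hA, hB⟩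
  rw [h.2 ℓ, if_neg hA]

lemma msplit_some_left {M A B : Mem} (h : msplit M A B) {ℓ : ℕ} (hA : (A ℓ).isSome) :
    (M ℓ).isSome := by rw [msplit_left_eq h hA]; exact hA

lemma msplit_some_right {M A B : Mem} (h : msplit M A B) {ℓ : ℕ} (hB : (B ℓ).isSome) :
    (M ℓ).isSome := by rw [msplit_right_eq h hB]; exact hB

omit [DecidableEq Var] in
lemma wf_sub {N : ℕ} {sz : Var → ℕ} {s : Var → List Byte} {B : Finset (ℕ × ℕ)}
    {M M' : Mem} (hwf : WfConfig N sz s B M)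
    (hsub : ∀ ℓ, (M' ℓ).isSome → (M ℓ).isSome) : WfConfig N sz s B M' :=
  ⟨hwf.1, hwf.2.1, hwf.2.2.1, fun ℓ hℓ => hwf.2.2.2 ℓ (hsub ℓ hℓ)⟩

end Aux

/-- Soundness of the `match` abduction rule: assuming
`size(ζ) = size(ζ')` and `φ ⊨ (ε = ε') * true`, if `φ * (ζ = ζ') * M ⊨ ψ`, then
`φ * (ε ↦ ζ) * (ζ = ζ') * M ⊨ ψ * (ε' ↦ ζ')`. -/
theorem match_rule_sound {Var : Type} [DecidableEq Var]
    (N : ℕ) (hN : 1 ≤ N) (sz : Var → ℕ) (hszpos : ∀ v, 1 ≤ sz v)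
    (φ Mf ψ : SLF Var) (ε ε' ζ ζ' : Expr Var)
    (hsize : ζ.size sz N = ζ'.size sz N)
    (hent : Entails N sz φ ((SLF.cmp .eq ε ε').star .tt))
    (h : Entails N sz ((φ.star (.cmp .eq ζ ζ')).star Mf) ψ) :
    Entails N sz (((φ.star (.pts ε ζ)).star (.cmp .eq ζ ζ')).star Mf)
      (ψ.star (.pts ε' ζ')) := by
  intro s B M hwf hsat
  obtain ⟨Ma, M4, h1, hMa, h4⟩ := hsat
  obtain ⟨Mb, Mc, h2, hMb, hc⟩ := hMa
  obtain ⟨M1, M2, h3, h1sat, h2sat⟩ := hMb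
  obtain ⟨hcnone, hζ⟩ := hc
  have hζ : ζ.eval B s = ζ'.eval B s := hζ
  have sub1 : ∀ ℓ, (M1 ℓ).isSome → (M ℓ).isSome := fun ℓ hℓ =>
    msplit_some_left h1 (msplit_some_left h2 (msplit_some_left h3 hℓ))
  have sub2 : ∀ ℓ, (M2 ℓ).isSome → (M ℓ).isSome := fun ℓ hℓ =>
    msplit_some_left h1 (msplit_some_left h2 (msplit_some_right h3 hℓ))
  have sub4 : ∀ ℓ, (M4 ℓ).isSome → (M ℓ).isSome := fun ℓ hℓ =>
    msplit_some_right h1 hℓ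
  have hwf1 : WfConfig N sz s B M1 := wf_sub hwf sub1
  obtain ⟨Mx, My, hx, hcmp, -⟩ := hent s B M1 hwf1 h1sat
  have hε : ε.eval B s = ε'.eval B s := hcmp.2
  set Mb' : Mem := mjoin M1 Mc with hMb'def
  set M' : Mem := mjoin Mb' M4 with hM'def
  have hMb'eq : ∀ ℓ, Mb' ℓ = M1 ℓ := by
    intro ℓ
    simp only [hMb'def, mjoin]
    by_cases hh : (M1 ℓ).isSome
    · rw [if_pos hh]
    · rw [if_neg hh, hcnone ℓ]
      cases hhh : M1 ℓ
      · rfl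
      · exact absurd (by rw [hhh]; rfl) hh
  have hM'eq : ∀ ℓ, M' ℓ = if (M1 ℓ).isSome then M1 ℓ else M4 ℓ := by
    intro ℓ
    simp only [hM'def, mjoin, hMb'eq ℓ]
  have subM' : ∀ ℓ, (M' ℓ).isSome → (M ℓ).isSome := by
    intro ℓ hℓ
    rw [hM'eq ℓ] at hℓ
    by_cases hh : (M1 ℓ).isSome
    · exact sub1 ℓ hh
    · rw [if_neg hh] at hℓ; exact sub4 ℓ hℓ
  have d14 : ∀ ℓ, ¬((M1 ℓ).isSome ∧ (M4 ℓ).isSome) := fun ℓ hp =>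
    h1.1 ℓ ⟨msplit_some_left h2 (msplit_some_left h3 hp.1), hp.2⟩
  have d24 : ∀ ℓ, ¬((M2 ℓ).isSome ∧ (M4 ℓ).isSome) := fun ℓ hp =>
    h1.1 ℓ ⟨msplit_some_left h2 (msplit_some_right h3 hp.1), hp.2⟩
  have d12 : ∀ ℓ, ¬((M1 ℓ).isSome ∧ (M2 ℓ).isSome) := h3.1
  have split1 : msplit M' Mb' M4 := by
    refine ⟨fun ℓ hh => ?_, fun ℓ => rfl⟩
    rw [hMb'eq ℓ] at hh
    exact d14 ℓ hh
  have split2 : msplit Mb' M1 Mc := by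
    refine ⟨fun ℓ hh => ?_, fun ℓ => rfl⟩
    have := hh.2
    rw [hcnone ℓ] at this
    exact absurd this (by simp)
  have hsatM' : sat N sz s B M' ((φ.star (.cmp .eq ζ ζ')).star Mf) :=
    ⟨Mb', M4, split1, ⟨M1, Mc, split2, h1sat, hcnone, hζ⟩, h4⟩
  have hwfM' : WfConfig N sz s B M' := wf_sub hwf subM'
  have hψ : sat N sz s B M' ψ := h s B M' hwfM' hsatM'
  obtain ⟨hdom2, hbytes2⟩ := h2sat
  have hpts' : sat N sz s B M2 (SLF.pts ε' ζ') := by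
    refine ⟨fun ℓ => ?_, ?_⟩
    · rw [show ε'.eval B s = ε.eval B s from hε.symm,
        show ζ'.size sz N = ζ.size sz N from hsize.symm]
      exact hdom2 ℓ
    · rw [show ε'.eval B s = ε.eval B s from hε.symm,
        show ζ'.size sz N = ζ.size sz N from hsize.symm,
        show ζ'.eval B s = ζ.eval B s from hζ.symm]
      exact hbytes2
  have splitFinal : msplit M M' M2 := by
    constructor
    · intro ℓ hp
      obtain ⟨ha, hb⟩ := hp
      rw [hM'eq ℓ] at ha
      by_cases hh : (M1 ℓ).isSome
      · exact d12 ℓ ⟨hh, hb⟩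
      · rw [if_neg hh] at ha
        exact d24 ℓ ⟨hb, ha⟩
    · intro ℓ
      rw [hM'eq ℓ]
      have hMeq : M ℓ = if (Ma ℓ).isSome then Ma ℓ else M4 ℓ := h1.2 ℓ
      have hMaeq : Ma ℓ = if (Mb ℓ).isSome then Mb ℓ else Mc ℓ := h2.2 ℓ
      have hMbeq : Mb ℓ = if (M1 ℓ).isSome then M1 ℓ else M2 ℓ := h3.2 ℓ
      by_cases hh1 : (M1 ℓ).isSome
      · rw [if_pos hh1]
        rw [if_pos hh1] at hMbeq
        have hb : Mb ℓ = M1 ℓ := hMbeq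
        have hbs : (Mb ℓ).isSome := by rw [hb]; exact hh1
        have hae : Ma ℓ = Mb ℓ := by rw [hMaeq, if_pos hbs]
        have has : (Ma ℓ).isSome := by rw [hae]; exact hbs
        rw [hMeq, if_pos has, hae, hb]
        simp [hh1]
      · rw [if_neg hh1]
        rw [if_neg hh1] at hMbeq
        by_cases hh4 : (M4 ℓ).isSome
        · rw [if_pos hh4]
          have hm2 : ¬(M2 ℓ).isSome := fun h2s => d24 ℓ ⟨h2s, hh4⟩
          have hMbnone : ¬(Mb ℓ).isSome := by rw [hMbeq]; exact hm2
          have hManone : ¬(Ma ℓ).isSome := by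
            rw [hMaeq, if_neg hMbnone, hcnone ℓ]; simp
          rw [hMeq, if_neg hManone]
        · by_cases hh2 : (M2 ℓ).isSome
          · have hMbsome : (Mb ℓ).isSome := by rw [hMbeq]; exact hh2
            have hae : Ma ℓ = Mb ℓ := by rw [hMaeq, if_pos hMbsome]
            have hMasome : (Ma ℓ).isSome := by rw [hae]; exact hMbsome
            rw [hMeq, if_pos hMasome, hae, hMbeq]
            cases hhh : M4 ℓ
            · simp [hhh]
            · exact absurd (by rw [hhh]; rfl) hh4
          · have hMbnone : ¬(Mb ℓ).isSome := by rw [hMbeq]; exact hh2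
            have hManone : ¬(Ma ℓ).isSome := by
              rw [hMaeq, if_neg hMbnone, hcnone ℓ]; simp
            rw [hMeq, if_neg hManone, if_neg hh4]
            cases hhh : M4 ℓ
            · cases hhh2 : M2 ℓ
              · rfl
              · exact absurd (by rw [hhh2]; rfl) hh2
            · exact absurd (by rw [hhh]; rfl) hh4
  exact ⟨M', M2, splitFinal, hψ, hpts'⟩


end Broom
end
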